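/- Let U ⊆ ℝ² be a Jordan domain and K a continuum such that points x, y ∈ U lie in different connected components of U \ K. Then there exists a connected component C of K ∩ cl(U) such that x and y lie in different connected components of U \ C. -/

import Mathlib

/-- A Jordan curve in the plane: a set homeomorphic to the unit circle. -/
def IsJordanCurve (Γ : Set (EuclideanSpace ℝ (Fin 2))) : Prop :=
  Nonempty (Γ ≃ₜ Metric.sphere (0 : EuclideanSpace ℝ (Fin 2)) 1)

/-- A Jordan domain: the bounded connected component of the complement of a
Jordan curve. -/
def IsJordanDomain (U : Set (EuclideanSpace ℝ (Fin 2))) : Prop :=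
  ∃ (Γ : Set (EuclideanSpace ℝ (Fin 2))) (z : EuclideanSpace ℝ (Fin 2)),
    IsJordanCurve Γ ∧ z ∈ Γᶜ ∧ U = connectedComponentIn Γᶜ z ∧ Bornology.IsBounded U

/-!
The argument goes through Janiszewski's theorem: if compact sets `S, T` in the plane have
connected intersection and neither separates `x` from `y`, then neither does `S ∪ T`. In `ℂ` this
follows from Borsuk's criterion: `y` lies in the component of `x` in the complement of a compact
set `W` iff `(z - x) / (z - y)` has a continuous logarithm on `W`. Logarithms on `S` and on `T`
differ by a constant on the connected set `S ∩ T`, so they glue to one on `S ∪ T`.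

Write `U` as a component of the complement of its Jordan curve `Γ`; a compact set `D` then
separates `x` from `y` in `U` iff `Γ ∪ D` separates them in the plane. If no component `C` of
`K ∩ closure U` separated them, a path from `x` to `y` around `Γ ∪ C` would also avoid a relatively
clopen neighbourhood of `C` in `K ∩ closure U`. Finitely many such neighbourhoods cover
`K ∩ closure U`, and they can be made disjoint; Janiszewski's theorem, applied to `Γ` with these
pieces added one at a time, shows that `Γ ∪ (K ∩ closure U)` does not separate `x` from `y`,
contradicting the hypothesis on `K`.
-/

open Set Metric Complex Bornology

variable {X : Type*} [TopologicalSpace X]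

lemma IsOpen.joinedIn_of_mem_connectedComponentIn [LocallyPathConnectedSpace X] {U : Set X}
    (hU : IsOpen U) {x y : X} (h : y ∈ connectedComponentIn U x) : JoinedIn U x y := by
  have hx : x ∈ U := connectedComponentIn_nonempty_iff.1 ⟨y, h⟩
  have hpc := hU.connectedComponentIn.isConnected_iff_isPathConnected.1
    (isConnected_connectedComponentIn_iff.2 hx)
  exact (hpc.joinedIn x (mem_connectedComponentIn hx) y h).mono (connectedComponentIn_subset U x)

lemma frontier_connectedComponentIn_compl_subset [LocallyConnectedSpace X] {W : Set X}
    (hW : IsClosed W) (x : X) : frontier (connectedComponentIn Wᶜ x) ⊆ W := by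
  intro p hp
  by_contra hpW
  have hnhds := connectedComponentIn_mem_nhds (hW.isOpen_compl.mem_nhds hpW)
  obtain ⟨q, hqp, hqx⟩ := mem_closure_iff_nhds.1 hp.1 _ hnhds
  refine hp.2 (mem_interior_iff_mem_nhds.2 ?_)
  rwa [connectedComponentIn_eq hqx, ← connectedComponentIn_eq hqp]

lemma IsClosed.connectedComponentIn {F : Set X} (hF : IsClosed F) (x : X) :
    IsClosed (connectedComponentIn F x) := by
  by_cases hx : x ∈ F
  · exact closure_subset_iff_isClosed.1
      (isPreconnected_connectedComponentIn.closure.subset_connectedComponentIn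
        (subset_closure (mem_connectedComponentIn hx))
        (closure_minimal (connectedComponentIn_subset F x) hF))
  · rw [connectedComponentIn_eq_empty hx]
    exact isClosed_empty

lemma connectedComponentIn_connectedComponentIn_compl_diff {Γ D : Set X} {z x : X}
    (hx : x ∈ connectedComponentIn Γᶜ z) :
    connectedComponentIn (connectedComponentIn Γᶜ z \ D) x = connectedComponentIn (Γ ∪ D)ᶜ x := by
  refine Subset.antisymm (connectedComponentIn_mono _ fun p hp hΓD => ?_) ?_
  · exact hΓD.elim (connectedComponentIn_subset _ _ hp.1) hp.2
  by_cases hxD : x ∈ (Γ ∪ D)ᶜ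
  · refine isPreconnected_connectedComponentIn.subset_connectedComponentIn
      (mem_connectedComponentIn hxD) fun p hp => ⟨?_, fun hpD => ?_⟩
    · rw [connectedComponentIn_eq hx]
      exact connectedComponentIn_mono x (compl_subset_compl.2 subset_union_left) hp
    · exact connectedComponentIn_subset _ _ hp (Or.inr hpD)
  · rw [connectedComponentIn_eq_empty hxD]
    exact empty_subset _

lemma Homeomorph.mem_connectedComponentIn_image_compl_iff {Y : Type*} [TopologicalSpace Y]
    (e : X ≃ₜ Y) {s : Set X} {x y : X} :
    e y ∈ connectedComponentIn (e '' s)ᶜ (e x) ↔ y ∈ connectedComponentIn sᶜ x := by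
  by_cases hx : x ∈ s
  · have h₁ : x ∉ sᶜ := fun h => h hx
    have h₂ : e x ∉ (e '' s)ᶜ := fun h => h (mem_image_of_mem e hx)
    simp [connectedComponentIn_eq_empty h₁, connectedComponentIn_eq_empty h₂]
  · rw [← image_compl_eq e.bijective, ← e.image_connectedComponentIn hx, e.injective.mem_set_image]

lemma isConnected_compl_closedBall {E : Type*} [NormedAddCommGroup E] [NormedSpace ℝ E]
    (h : 1 < Module.rank ℝ E) {R : ℝ} (hR : 0 ≤ R) : IsConnected (closedBall (0 : E) R)ᶜ := by
  have : (closedBall (0 : E) R)ᶜ = (fun p : ℝ × E => p.1 • p.2) '' (Ioi R ×ˢ sphere 0 1) := by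
    ext z
    simp only [mem_compl_iff, mem_closedBall_zero_iff, not_le, mem_image, mem_prod, mem_Ioi,
      mem_sphere_zero_iff_norm, Prod.exists]
    constructor
    · intro hz
      have hz0 : ‖z‖ ≠ 0 := (hR.trans_lt hz).ne'
      exact ⟨‖z‖, ‖z‖⁻¹ • z, ⟨hz, by simp [norm_smul, hz0]⟩, smul_inv_smul₀ hz0 z⟩
    · rintro ⟨r, u, ⟨hr, hu⟩, rfl⟩
      rwa [norm_smul, hu, mul_one, Real.norm_of_nonneg (hR.trans hr.le)]
  rw [this]
  exact (isConnected_Ioi.prod (isConnected_sphere h 0 zero_le_one)).image _ (by fun_prop)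

lemma connectedComponentIn_compl_eq_of_not_isBounded {E : Type*} [NormedAddCommGroup E]
    [NormedSpace ℝ E] (h : 1 < Module.rank ℝ E) {W : Set E} (hW : IsBounded W) {x y : E}
    (hx : ¬IsBounded (connectedComponentIn Wᶜ x)) (hy : ¬IsBounded (connectedComponentIn Wᶜ y)) :
    connectedComponentIn Wᶜ x = connectedComponentIn Wᶜ y := by
  obtain ⟨r, hr⟩ := hW.subset_closedBall 0
  set R := max r 0
  have hext : (closedBall (0 : E) R)ᶜ ⊆ Wᶜ :=
    compl_subset_compl.2 (hr.trans (closedBall_subset_closedBall (le_max_left r 0)))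
  have hsub : ∀ p, ¬IsBounded (connectedComponentIn Wᶜ p) →
      (closedBall (0 : E) R)ᶜ ⊆ connectedComponentIn Wᶜ p := by
    intro p hp
    obtain ⟨q, hq, hqR⟩ := not_subset.1 (mt isBounded_closedBall.subset hp)
    rw [connectedComponentIn_eq hq]
    exact (isConnected_compl_closedBall h (le_max_right r 0)).isPreconnected
      |>.subset_connectedComponentIn hqR hext
  obtain ⟨q, -, hqR⟩ := not_subset.1 (mt (isBounded_closedBall (x := (0 : E)) (r := R)).subset hx)
  exact (connectedComponentIn_eq (hsub x hx hqR)).trans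
    (connectedComponentIn_eq (hsub y hy hqR)).symm

lemma exists_isClopen_disjoint_of_disjoint_connectedComponent [T2Space X] [CompactSpace X]
    {P : Set X} (hP : IsClosed P) {x : X} (hd : Disjoint P (connectedComponent x)) :
    ∃ s, IsClopen s ∧ x ∈ s ∧ Disjoint P s := by
  rw [connectedComponent_eq_iInter_isClopen, disjoint_iff_inter_eq_empty] at hd
  obtain ⟨u, hu⟩ := hP.isCompact.elim_finite_subfamily_closed _ (fun s => s.2.1.isClosed) hd
  exact ⟨⋂ s ∈ u, s.1, isClopen_biInter_finset fun s _ => s.2.1, mem_iInter₂.2 fun s _ => s.2.2,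
    disjoint_iff_inter_eq_empty.2 hu⟩

lemma IsCompact.exists_isOpen_inter_disjoint [T2Space X] {K P : Set X} (hK : IsCompact K)
    (hP : IsClosed P) {z : X} (hz : z ∈ K) (hd : Disjoint P (connectedComponentIn K z)) :
    ∃ O, IsOpen O ∧ z ∈ O ∧ IsCompact (K ∩ O) ∧ Disjoint P (K ∩ O) := by
  have := isCompact_iff_compactSpace.1 hK
  rw [connectedComponentIn_eq_image hz] at hd
  obtain ⟨s, hs, hzs, hPs⟩ := exists_isClopen_disjoint_of_disjoint_connectedComponent
    (hP.preimage continuous_subtype_val) (x := ⟨z, hz⟩)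
    (disjoint_left.2 fun q hq hqc => disjoint_left.1 hd hq (mem_image_of_mem _ hqc))
  obtain ⟨O, hO, rfl⟩ := isOpen_induced_iff.1 hs.isOpen
  refine ⟨O, hO, hzs, ?_, ?_⟩ <;> rw [← Subtype.image_preimage_coe]
  · exact hs.isClosed.isCompact.image continuous_subtype_val
  · rw [disjoint_left]
    rintro _ hp ⟨q, hq, rfl⟩
    exact disjoint_left.1 hPs hp hq

lemma exists_isOpen_mem_connectedComponentIn_compl_union [T2Space X]
    [LocallyPathConnectedSpace X] {Γ K : Set X} (hΓ : IsClosed Γ) (hK : IsCompact K) {z : X}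
    (hz : z ∈ K) {x y : X} (h : y ∈ connectedComponentIn (Γ ∪ connectedComponentIn K z)ᶜ x) :
    ∃ O, IsOpen O ∧ z ∈ O ∧ IsCompact (K ∩ O) ∧
      y ∈ connectedComponentIn (Γ ∪ (K ∩ O))ᶜ x := by
  obtain ⟨γ, hγ⟩ := (hΓ.union (hK.isClosed.connectedComponentIn z)).isOpen_compl
    |>.joinedIn_of_mem_connectedComponentIn h
  obtain ⟨O, hO, hzO, hKO, hdisj⟩ := hK.exists_isOpen_inter_disjoint
    (isCompact_range γ.continuous).isClosed hz
    (disjoint_left.2 fun _ ⟨t, ht⟩ hC => hγ t (Or.inr (ht ▸ hC)))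
  refine ⟨O, hO, hzO, hKO, (isConnected_range γ.continuous).isPreconnected
    |>.subset_connectedComponentIn ⟨0, γ.source⟩ ?_ ⟨1, γ.target⟩⟩
  rintro _ ⟨t, rfl⟩ (hΓt | hOt)
  · exact hγ t (Or.inl hΓt)
  · exact disjoint_left.1 hdisj ⟨t, rfl⟩ hOt

def HasContinuousLog (s : Set X) (f : X → ℂ) : Prop :=
  ∃ g : X → ℂ, ContinuousOn g s ∧ ∀ z ∈ s, exp (g z) = f z

namespace HasContinuousLog

variable {s : Set X} {f f' : X → ℂ}

lemma congr (h : HasContinuousLog s f) (hff' : EqOn f f' s) : HasContinuousLog s f' :=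
  let ⟨g, hg, he⟩ := h
  ⟨g, hg, fun z hz => (he z hz).trans (hff' hz)⟩

lemma inv (h : HasContinuousLog s f) : HasContinuousLog s f⁻¹ :=
  let ⟨g, hg, he⟩ := h
  ⟨-g, hg.neg, fun z hz => by simp [exp_neg, he z hz]⟩

lemma const {c : ℂ} (hc : c ≠ 0) : HasContinuousLog s fun _ => c :=
  ⟨fun _ => log c, continuousOn_const, fun _ _ => exp_log hc⟩

end HasContinuousLog

lemma IsPreconnected.exists_eq_add_of_exp_eq {s : Set X} (hs : IsPreconnected s)
    {g₁ g₂ : X → ℂ} (h₁ : ContinuousOn g₁ s) (h₂ : ContinuousOn g₂ s)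
    (he : ∀ z ∈ s, exp (g₁ z) = exp (g₂ z)) :
    ∃ c, exp c = 1 ∧ ∀ z ∈ s, g₁ z = g₂ z + c := by
  rcases s.eq_empty_or_nonempty with rfl | ⟨z₀, hz₀⟩
  · exact ⟨0, exp_zero, fun _ h => h.elim⟩
  have hexp : ∀ z ∈ s, exp (g₁ z - g₂ z) = 1 := fun z hz => by
    rw [exp_sub, he z hz, div_self (exp_ne_zero _)]
  refine ⟨g₁ z₀ - g₂ z₀, hexp z₀ hz₀, fun z hz => ?_⟩
  have := isCoveringMap_exp.constOn_of_comp hs (h₁.sub h₂)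
    (fun a ha a' ha' => Subtype.ext ((hexp a ha).trans (hexp a' ha').symm)) hz hz₀
  simp only [Pi.sub_apply] at this
  linear_combination this

lemma HasContinuousLog.of_homotopy {s : Set X} {H : unitInterval × X → ℂ}
    (hH : ContinuousOn H (univ ×ˢ s)) (hne : ∀ t, ∀ z ∈ s, H (t, z) ≠ 0)
    (h₀ : HasContinuousLog s fun z => H (0, z)) : HasContinuousLog s fun z => H (1, z) := by
  classical
  obtain ⟨g, hg, hge⟩ := h₀
  let H' : C(unitInterval × s, {w : ℂ // w ≠ 0}) :=
    ⟨fun p => ⟨H (p.1, p.2), hne p.1 p.2 p.2.2⟩,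
      (hH.comp_continuous (by fun_prop) fun p => ⟨trivial, p.2.2⟩).subtype_mk _⟩
  let g' : C(s, ℂ) := ⟨s.domRestrict g, hg.domRestrict⟩
  have h0 : ∀ z, H' (0, z) = ⟨exp (g' z), exp_ne_zero _⟩ := fun z => Subtype.ext (hge z z.2).symm
  set L := isCoveringMap_exp.liftHomotopy H' g' h0
  have hL : ∀ p, exp (L p) = H (p.1, p.2) := fun p =>
    congrArg Subtype.val (congrFun (isCoveringMap_exp.liftHomotopy_lifts H' g' h0) p)
  refine ⟨fun z => if hz : z ∈ s then L (1, ⟨z, hz⟩) else 0, ?_, fun z hz => by simp [hz, hL]⟩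
  rw [continuousOn_iff_continuous_domRestrict]
  have : s.domRestrict (fun z => if hz : z ∈ s then L (1, ⟨z, hz⟩) else 0) = fun z => L (1, z) :=
    funext fun z => by simp [z.2]
  rw [this]
  fun_prop

lemma HasContinuousLog.union {S T : Set X} (hS : IsClosed S) (hT : IsClosed T)
    (hST : IsPreconnected (S ∩ T)) {f : X → ℂ} (hfS : HasContinuousLog S f)
    (hfT : HasContinuousLog T f) : HasContinuousLog (S ∪ T) f := by
  classical
  obtain ⟨g₁, hg₁, he₁⟩ := hfS
  obtain ⟨g₂, hg₂, he₂⟩ := hfT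
  obtain ⟨c, hc, hgc⟩ := hST.exists_eq_add_of_exp_eq (hg₁.mono inter_subset_left)
    (hg₂.mono inter_subset_right) fun z hz => (he₁ z hz.1).trans (he₂ z hz.2).symm
  have hT' : EqOn (S.piecewise g₁ fun z => g₂ z + c) (fun z => g₂ z + c) T := fun z hz => by
    by_cases hzS : z ∈ S
    · simp [hzS, hgc z ⟨hzS, hz⟩]
    · simp [hzS]
  refine ⟨S.piecewise g₁ fun z => g₂ z + c, ?_, fun z hz => ?_⟩
  · exact (hg₁.congr fun z hz => S.piecewise_eq_of_mem _ _ hz).union_of_isClosed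
      ((hg₂.add continuousOn_const).congr hT') hS hT
  · by_cases hzS : z ∈ S
    · simp [hzS, he₁ z hzS]
    · simp [hzS, exp_add, hc, he₂ z (hz.resolve_left hzS)]

lemma hasContinuousLog_of_continuous {E : Type*} [NormedAddCommGroup E] [NormedSpace ℝ E]
    {F : E → ℂ} (hF : Continuous F) (hne : ∀ z, F z ≠ 0) (s : Set E) : HasContinuousLog s F := by
  simpa using HasContinuousLog.of_homotopy (s := s) (H := fun p => F ((p.1 : ℝ) • p.2))
    (by fun_prop) (fun _ _ _ => hne _) ((HasContinuousLog.const (hne 0)).congr fun z _ => by simp)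

lemma not_hasContinuousLog_id_sphere {R : ℝ} (hR : 0 < R) :
    ¬HasContinuousLog (sphere (0 : ℂ) R) id := by
  rintro ⟨G, hG, hGe⟩
  set c : ℝ → ℂ := fun θ => R * exp (θ * I)
  have hc : ∀ θ, c θ ∈ sphere (0 : ℂ) R := fun θ => by simp [c, abs_of_pos hR]
  set u : ℝ → ℂ := fun θ => G (c θ) - (Real.log R + θ * I)
  have hu : Continuous u := (hG.comp_continuous (by fun_prop) hc).sub (by fun_prop)
  have hexp : ∀ θ, exp (u θ) = 1 := fun θ => by
    rw [exp_sub, hGe _ (hc θ), exp_add, ← ofReal_exp, Real.exp_log hR]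
    exact div_self (mul_ne_zero (by exact_mod_cast hR.ne') (exp_ne_zero _))
  have hperiod : c (2 * Real.pi) = c 0 := by simp [c, exp_two_pi_mul_I]
  have := isCoveringMap_exp.const_of_comp hu
    (fun a a' => Subtype.ext ((hexp a).trans (hexp a').symm)) 0 (2 * Real.pi)
  simp only [u, hperiod] at this
  simp [Real.pi_ne_zero, I_ne_zero] at this

lemma not_hasContinuousLog_sub_sphere {R : ℝ} {a : ℂ} (ha : ‖a‖ < R) :
    ¬HasContinuousLog (sphere (0 : ℂ) R) (· - a) := by
  intro h
  refine not_hasContinuousLog_id_sphere ((norm_nonneg a).trans_lt ha) ?_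
  have hne : ∀ t : unitInterval, ∀ z ∈ sphere (0 : ℂ) R, z - (unitInterval.symm t : ℝ) * a ≠ 0 := by
    intro t z hz h0
    have : ‖z‖ ≤ ‖a‖ := by
      rw [sub_eq_zero.1 h0, norm_mul]
      exact mul_le_of_le_one_left (norm_nonneg a) (by
        rw [norm_real, Real.norm_of_nonneg (unitInterval.nonneg _)]; exact unitInterval.le_one _)
    simp_all only [mem_sphere_iff_norm, sub_zero]
    linarith
  refine (HasContinuousLog.of_homotopy (H := fun p => p.2 - (unitInterval.symm p.1 : ℝ) * a)
    (by fun_prop) hne (h.congr fun z _ => by simp)).congr fun z _ => by simp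

lemma hasContinuousLog_of_mem_connectedComponentIn {W : Set ℂ} (hW : IsClosed W) {x y : ℂ}
    (h : y ∈ connectedComponentIn Wᶜ x) : HasContinuousLog W fun z => (z - x) / (z - y) := by
  obtain ⟨γ, hγ⟩ := (hW.isOpen_compl.joinedIn_of_mem_connectedComponentIn h).symm
  have hy : y ∉ W := connectedComponentIn_subset _ _ h
  have hsub : ∀ t, ∀ z ∈ W, z - γ t ≠ 0 := fun t z hz h0 => hγ t (sub_eq_zero.1 h0 ▸ hz)
  have hsuby : ∀ z ∈ W, z - y ≠ 0 := fun z hz h0 => hy (sub_eq_zero.1 h0 ▸ hz)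
  refine (HasContinuousLog.of_homotopy (H := fun p => (p.2 - γ p.1) / (p.2 - y))
    (ContinuousOn.div (by fun_prop) (by fun_prop) fun p hp => hsuby p.2 hp.2)
    (fun t z hz => div_ne_zero (hsub t z hz) (hsuby z hz))
    ((HasContinuousLog.const one_ne_zero).congr fun z hz => ?_)).congr fun z _ => by simp
  simp [div_self (hsuby z hz)]

lemma not_hasContinuousLog_of_isBounded_connectedComponentIn {W : Set ℂ} (hW : IsClosed W)
    {x y : ℂ} (hx : x ∉ W) (hy : y ∉ W) (hxy : y ∉ connectedComponentIn Wᶜ x)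
    (hb : IsBounded (connectedComponentIn Wᶜ x)) :
    ¬HasContinuousLog W fun z => (z - x) / (z - y) := by
  classical
  rintro ⟨g, hg, hge⟩
  set V := connectedComponentIn Wᶜ x
  obtain ⟨G, hG⟩ := ContinuousMap.exists_restrict_eq hW ⟨W.domRestrict g, hg.domRestrict⟩
  have hGW : ∀ z ∈ W, G z = g z := fun z hz => DFunLike.congr_fun hG ⟨z, hz⟩
  -- glue `(z - y) * exp G` on `V` to `z - x` outside: they agree on `frontier V ⊆ W`
  set F : ℂ → ℂ := fun z => if z ∈ V then (z - y) * exp (G z) else z - x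
  have hF : Continuous F := by
    refine Continuous.if (fun z hz => ?_) (by fun_prop) (by fun_prop)
    have hzW : z ∈ W := frontier_connectedComponentIn_compl_subset hW x hz
    rw [hGW z hzW, hge z hzW, mul_div_cancel₀ _ (sub_ne_zero.2 (ne_of_mem_of_not_mem hzW hy))]
  have hFne : ∀ z, F z ≠ 0 := by
    intro z
    by_cases hz : z ∈ V
    · simpa [F, hz, sub_eq_zero] using ne_of_mem_of_not_mem hz hxy
    · simp only [F, hz, if_false]
      exact sub_ne_zero.2 fun h => hz (h ▸ mem_connectedComponentIn hx)
  obtain ⟨R, hR⟩ := hb.subset_ball 0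
  refine not_hasContinuousLog_sub_sphere (R := R) (a := x)
    (by simpa using hR (mem_connectedComponentIn hx))
    ((hasContinuousLog_of_continuous hF hFne _).congr fun z hz => ?_)
  have : z ∉ V := fun h => (mem_ball_zero_iff.1 (hR h)).ne (mem_sphere_zero_iff_norm.1 hz)
  simp [F, this]

theorem mem_connectedComponentIn_compl_iff_hasContinuousLog {W : Set ℂ} (hW : IsCompact W)
    {x y : ℂ} (hx : x ∉ W) (hy : y ∉ W) :
    y ∈ connectedComponentIn Wᶜ x ↔ HasContinuousLog W fun z => (z - x) / (z - y) := by
  refine ⟨hasContinuousLog_of_mem_connectedComponentIn hW.isClosed, fun hlog => ?_⟩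
  by_contra hxy
  by_cases hbx : IsBounded (connectedComponentIn Wᶜ x)
  · exact not_hasContinuousLog_of_isBounded_connectedComponentIn hW.isClosed hx hy hxy hbx hlog
  by_cases hby : IsBounded (connectedComponentIn Wᶜ y)
  · have hyx : x ∉ connectedComponentIn Wᶜ y := fun h =>
      hxy (connectedComponentIn_eq h ▸ mem_connectedComponentIn hy)
    exact not_hasContinuousLog_of_isBounded_connectedComponentIn hW.isClosed hy hx hyx hby
      (hlog.inv.congr fun z _ => by simp [inv_div])
  have hrank : 1 < Module.rank ℝ ℂ := Complex.rank_real_complex ▸ Nat.one_lt_ofNat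
  exact hxy (connectedComponentIn_compl_eq_of_not_isBounded hrank hW.isBounded hbx hby ▸
    mem_connectedComponentIn hy)

theorem janiszewski {S T : Set ℂ} (hS : IsCompact S) (hT : IsCompact T)
    (hST : IsPreconnected (S ∩ T)) {x y : ℂ} (hSxy : y ∈ connectedComponentIn Sᶜ x)
    (hTxy : y ∈ connectedComponentIn Tᶜ x) : y ∈ connectedComponentIn (S ∪ T)ᶜ x := by
  have hxS : x ∉ S := connectedComponentIn_nonempty_iff.1 ⟨y, hSxy⟩
  have hxT : x ∉ T := connectedComponentIn_nonempty_iff.1 ⟨y, hTxy⟩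
  have hyS : y ∉ S := connectedComponentIn_subset _ _ hSxy
  have hyT : y ∉ T := connectedComponentIn_subset _ _ hTxy
  rw [mem_connectedComponentIn_compl_iff_hasContinuousLog (hS.union hT) (by simp [hxS, hxT])
    (by simp [hyS, hyT])]
  exact (hasContinuousLog_of_mem_connectedComponentIn hS.isClosed hSxy).union hS.isClosed
    hT.isClosed hST (hasContinuousLog_of_mem_connectedComponentIn hT.isClosed hTxy)

local notation "ℝ²" => EuclideanSpace ℝ (Fin 2)

theorem janiszewski_plane {S T : Set ℝ²} (hS : IsCompact S) (hT : IsCompact T)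
    (hST : IsPreconnected (S ∩ T)) {x y : ℝ²} (hSxy : y ∈ connectedComponentIn Sᶜ x)
    (hTxy : y ∈ connectedComponentIn Tᶜ x) : y ∈ connectedComponentIn (S ∪ T)ᶜ x := by
  let e : ℝ² ≃ₜ ℂ := Complex.orthonormalBasisOneI.repr.toHomeomorph.symm
  rw [← e.mem_connectedComponentIn_image_compl_iff, image_union]
  refine janiszewski (hS.image e.continuous) (hT.image e.continuous) ?_
    (e.mem_connectedComponentIn_image_compl_iff.2 hSxy)
    (e.mem_connectedComponentIn_image_compl_iff.2 hTxy)
  rw [← image_inter e.injective]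
  exact hST.image _ e.continuous.continuousOn

lemma mem_connectedComponentIn_compl_union_of_disjoint {Γ A B : Set ℝ²} (hΓ : IsCompact Γ)
    (hΓc : IsPreconnected Γ) (hA : IsCompact A) (hB : IsCompact B) (hAB : Disjoint A B)
    {x y : ℝ²} (hAxy : y ∈ connectedComponentIn (Γ ∪ A)ᶜ x)
    (hBxy : y ∈ connectedComponentIn (Γ ∪ B)ᶜ x) :
    y ∈ connectedComponentIn (Γ ∪ (A ∪ B))ᶜ x := by
  rw [union_union_distrib_left]
  refine janiszewski_plane (hΓ.union hA) (hΓ.union hB) ?_ hAxy hBxy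
  rwa [← union_inter_distrib_left, hAB.inter_eq, union_empty]

theorem exists_separating_connectedComponentIn {Γ K : Set ℝ²} (hΓ : IsCompact Γ)
    (hΓc : IsPreconnected Γ) (hK : IsCompact K) {x y : ℝ²}
    (hΓxy : y ∈ connectedComponentIn Γᶜ x) (hsep : y ∉ connectedComponentIn (Γ ∪ K)ᶜ x) :
    ∃ z ∈ K, y ∉ connectedComponentIn (Γ ∪ connectedComponentIn K z)ᶜ x := by
  by_contra! hall
  suffices h : ∃ O, IsOpen O ∧ K ⊆ O ∧ IsCompact (K ∩ O) ∧
      y ∈ connectedComponentIn (Γ ∪ (K ∩ O))ᶜ x by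
    obtain ⟨O, -, hKO, -, hO⟩ := h
    exact hsep (by rwa [inter_eq_left.2 hKO] at hO)
  refine hK.induction_on (p := fun A => ∃ O, IsOpen O ∧ A ⊆ O ∧ IsCompact (K ∩ O) ∧
    y ∈ connectedComponentIn (Γ ∪ (K ∩ O))ᶜ x) ?_ ?_ ?_ ?_
  · exact ⟨∅, isOpen_empty, subset_rfl, by simp, by simpa using hΓxy⟩
  · exact fun s t hst ⟨O, hO, htO, hc, h⟩ => ⟨O, hO, hst.trans htO, hc, h⟩
  · rintro s t ⟨O, hO, hsO, hc, h⟩ ⟨O', hO', htO', hc', h'⟩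
    have hsplit : K ∩ (O ∪ O') = K ∩ O ∪ (K ∩ O') \ O := by
      ext p; simp only [mem_inter_iff, mem_union, mem_sdiff]; tauto
    refine ⟨O ∪ O', hO.union hO', union_subset_union hsO htO', ?_, ?_⟩ <;> rw [hsplit]
    · exact hc.union (hc'.diff hO)
    · exact mem_connectedComponentIn_compl_union_of_disjoint hΓ hΓc hc (hc'.diff hO)
        (disjoint_left.2 fun p hp hq => hq.2 hp.2) h
        (connectedComponentIn_mono _ (compl_subset_compl.2
          (union_subset_union_right _ sdiff_subset)) h')
  · intro z hz
    obtain ⟨O, hO, hzO, hc, h⟩ :=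
      exists_isOpen_mem_connectedComponentIn_compl_union hΓ.isClosed hK hz (hall z hz)
    exact ⟨K ∩ O, inter_mem_nhdsWithin K (hO.mem_nhds hzO), O, hO, inter_subset_right, hc, h⟩

lemma IsJordanCurve.isCompact {Γ : Set ℝ²} (hΓ : IsJordanCurve Γ) : IsCompact Γ := by
  obtain ⟨e⟩ := hΓ
  have := isCompact_iff_compactSpace.1 (isCompact_sphere (0 : ℝ²) 1)
  exact isCompact_iff_compactSpace.2 e.symm.compactSpace

lemma IsJordanCurve.isConnected {Γ : Set ℝ²} (hΓ : IsJordanCurve Γ) : IsConnected Γ := by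
  obtain ⟨e⟩ := hΓ
  have hrank : 1 < Module.rank ℝ ℝ² := by
    rw [← Module.finrank_eq_rank, finrank_euclideanSpace_fin]
    exact Nat.one_lt_ofNat
  exact isConnected_iff_connectedSpace.2 (e.symm.connectedSpace_iff.1
    (isConnected_iff_connectedSpace.1 (isConnected_sphere hrank 0 zero_le_one)))

theorem stmt12_general (U K : Set (EuclideanSpace ℝ (Fin 2))) (hU : IsJordanDomain U)
    (hKc : IsCompact K)
    (x y : EuclideanSpace ℝ (Fin 2)) (hx : x ∈ U \ K) (hy : y ∈ U \ K)
    (hsep : connectedComponentIn (U \ K) x ≠ connectedComponentIn (U \ K) y) :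
    ∃ C : Set (EuclideanSpace ℝ (Fin 2)),
      (∃ z ∈ K ∩ closure U, C = connectedComponentIn (K ∩ closure U) z) ∧
      connectedComponentIn (U \ C) x ≠ connectedComponentIn (U \ C) y := by
  obtain ⟨Γ, z₀, hΓ, -, rfl, -⟩ := hU
  have hΓxy : y ∈ connectedComponentIn Γᶜ x := connectedComponentIn_eq hx.1 ▸ hy.1
  have hUK : connectedComponentIn Γᶜ z₀ \ K
      = connectedComponentIn Γᶜ z₀ \ (K ∩ closure (connectedComponentIn Γᶜ z₀)) := by
    rw [sdiff_inter, sdiff_eq_empty.2 subset_closure, union_empty]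
  have hsep' : y ∉ connectedComponentIn (Γ ∪ K ∩ closure (connectedComponentIn Γᶜ z₀))ᶜ x := by
    rw [← connectedComponentIn_connectedComponentIn_compl_diff hx.1, ← hUK]
    exact fun h => hsep (connectedComponentIn_eq h)
  obtain ⟨z, hz, hzsep⟩ := exists_separating_connectedComponentIn hΓ.isCompact
    hΓ.isConnected.isPreconnected (hKc.inter_right isClosed_closure) hΓxy hsep'
  refine ⟨_, ⟨z, hz, rfl⟩, fun heq => hzsep ?_⟩
  rw [← connectedComponentIn_connectedComponentIn_compl_diff hx.1, heq]
  exact mem_connectedComponentIn ⟨hy.1, fun h => hy.2 (connectedComponentIn_subset _ _ h).1⟩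

theorem stmt12 (U K : Set (EuclideanSpace ℝ (Fin 2))) (hU : IsJordanDomain U)
    (hKc : IsCompact K) (hKconn : IsConnected K)
    (x y : EuclideanSpace ℝ (Fin 2)) (hx : x ∈ U \ K) (hy : y ∈ U \ K)
    (hsep : connectedComponentIn (U \ K) x ≠ connectedComponentIn (U \ K) y) :
    ∃ C : Set (EuclideanSpace ℝ (Fin 2)),
      (∃ z ∈ K ∩ closure U, C = connectedComponentIn (K ∩ closure U) z) ∧
      connectedComponentIn (U \ C) x ≠ connectedComponentIn (U \ C) y :=
  stmt12_general U K hU hKc x y hx hy hsep
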